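/- Let u : ℝ → ℝ be the cusped soliton: a continuous even function with u(0) = 1, 0 < u(x) < 1 for x ≠ 0, u(x) → 0 as |x| → ∞, twice continuously differentiable on ℝ \ {0}, satisfying (1 − u(x)²)·u''(x) = u(x) and u'(x)² = −log(1 − u(x)²) for all x ≠ 0. Then the function x ↦ x·u(x)·u'(x)/(1 − u(x)²) is integrable on ℝ, the function x ↦ log(1 − u(x)²) is integrable on ℝ, and ∫_ℝ x·u(x)·u'(x)/(1 − u(x)²) dx = (1/2)·∫_ℝ log(1 − u(x)²) dx, which is strictly negative; in particular this quantity is nonzero. -/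

import Mathlib

/-!
On `x > 0` the equation `(1 - u²) u'' = u` makes `u'` increasing, and since `u > 0` tends to `0`
this forces `u' < 0`. The mean value theorem on `[0, x]` then gives
`x |u'(x)| ≤ 1 - u(x) ≤ 1 - u(x)²`. Together with `u'² = -log (1 - u²) ≥ u²` this bounds the
integrand `x u u' / (1 - u²)` by `|u'|`, which is integrable because `u` is monotone with a
limit; it bounds `-log (1 - u²)` by `-log x + C` near `0` and by `C |u'|` near `∞`, and it makes
`x log (1 - u²)` vanish at both ends. Integrating `x · (log (1 - u²))'` by parts on `(0, ∞)` and
using evenness gives the identity, and the sign comes from `log (1 - u²) < 0`.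
-/

open MeasureTheory Filter Set Topology Real

theorem Function.Even.integrable {E : Type*} [NormedAddCommGroup E] {F : ℝ → E}
    (hF : F.Even) (hi : IntegrableOn F (Ioi 0)) : Integrable F := by
  have hIic : IntegrableOn F (Iic 0) := by
    let m : MeasurableEmbedding fun x : ℝ => -x := (Homeomorph.neg ℝ).measurableEmbedding
    rw [← Measure.map_neg_eq_self (volume : Measure ℝ), m.integrableOn_map_iff]
    simpa [Function.comp_def, hF _] using Iff.mpr integrableOn_Ici_iff_integrableOn_Ioi hi
  simpa using hIic.union hi

theorem Function.Even.integral_eq_two_mul_integral_Ioi {F : ℝ → ℝ} (hF : F.Even) :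
    ∫ x, F x = 2 * ∫ x in Ioi 0, F x := by
  have hF_abs : (fun x => F |x|) = F := funext fun x => by
    rcases abs_choice x with h | h <;> simp only [h, hF x]
  simpa [hF_abs] using integral_comp_abs (f := F)

theorem setIntegral_neg_of_forall_neg {X : Type*} [MeasurableSpace X] {μ : Measure X}
    {s : Set X} {f : X → ℝ} (hs : MeasurableSet s) (hμ : μ s ≠ 0)
    (hf : IntegrableOn f s μ) (hneg : ∀ x ∈ s, f x < 0) : ∫ x in s, f x ∂μ < 0 := by
  have hpos : 0 < ∫ x in s, -f x ∂μ := by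
    rw [setIntegral_pos_iff_support_of_nonneg_ae
      ((ae_restrict_iff' hs).2 (ae_of_all _ fun x hx => (neg_pos.2 (hneg x hx)).le)) hf.neg]
    have : s ⊆ Function.support (fun x => -f x) ∩ s := fun x hx =>
      ⟨neg_ne_zero.2 (hneg x hx).ne, hx⟩
    exact (pos_iff_ne_zero.2 hμ).trans_le (measure_mono this)
  rw [integral_neg] at hpos
  linarith

theorem sub_le_mul_deriv_of_monotoneOn {u : ℝ → ℝ} {a b : ℝ} (hab : a < b)
    (hc : ContinuousOn u (Icc a b)) (hd : DifferentiableOn ℝ u (Ioo a b))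
    (hm : MonotoneOn (deriv u) (Ioc a b)) : u b - u a ≤ (b - a) * deriv u b := by
  obtain ⟨c, hc, hslope⟩ := exists_deriv_eq_slope u hab hc hd
  have := hm (Ioo_subset_Ioc_self hc) (right_mem_Ioc.2 hab) hc.2.le
  rw [hslope, div_le_iff₀ (sub_pos.2 hab)] at this
  linarith

theorem deriv_neg_of_monotoneOn_deriv {u : ℝ → ℝ} {a x : ℝ} (hc : ContinuousOn u (Ici a))
    (hd : DifferentiableOn ℝ u (Ioi a)) (hm : MonotoneOn (deriv u) (Ioi a))
    (hpos : ∀ y, a < y → 0 < u y) (hlim : Tendsto u atTop (𝓝 0)) (hx : a < x) :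
    deriv u x < 0 := by
  by_contra! hnonneg
  have hmono : MonotoneOn u (Ici x) := by
    refine monotoneOn_of_deriv_nonneg (convex_Ici x) (hc.mono (Ici_subset_Ici.2 hx.le))
      (hd.mono ?_) fun y hy => ?_
    · rw [interior_Ici]; exact Ioi_subset_Ioi hx.le
    · rw [interior_Ici] at hy
      exact hnonneg.trans (hm hx (hx.trans hy) hy.le)
  have : u x ≤ 0 := ge_of_tendsto hlim <| (eventually_ge_atTop x).mono
    fun y hy => hmono self_mem_Ici hy hy
  exact (hpos x hx).not_ge this

theorem hasDerivAt_log_one_sub_sq {u : ℝ → ℝ} {u' x : ℝ} (hu : HasDerivAt u u' x)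
    (hx : 1 - u x ^ 2 ≠ 0) :
    HasDerivAt (fun y => log (1 - u y ^ 2)) (-2 * u x * u' / (1 - u x ^ 2)) x := by
  have h : HasDerivAt (fun y => 1 - u y ^ 2) (-(2 * u x * u')) x := by
    simpa using (hu.fun_pow 2).const_sub 1
  convert h.log hx using 1
  ring

theorem Function.Even.deriv_neg {u : ℝ → ℝ} (hu : u.Even) (x : ℝ) :
    deriv u (-x) = -deriv u x := by
  have h := deriv_comp_neg (f := u) (x := -x)
  rw [neg_neg, show (fun y => u (-y)) = u from funext hu] at h
  exact h

theorem integrableOn_of_continuousOn_of_abs_le {F G : ℝ → ℝ} {s : Set ℝ}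
    (hs : MeasurableSet s) (hG : IntegrableOn G s) (hF : ContinuousOn F s)
    (hle : ∀ x ∈ s, |F x| ≤ G x) : IntegrableOn F s :=
  hG.mono' (hF.aestronglyMeasurable hs) ((ae_restrict_iff' hs).2 (ae_of_all _ hle))

namespace CuspedSoliton

variable {u : ℝ → ℝ} (hc : ContinuousOn u (Ici 0)) (h0 : u 0 = 1)
  (hrange : ∀ x, 0 < x → 0 < u x ∧ u x < 1) (hlim : Tendsto u atTop (𝓝 0))
  (hsmooth : ContDiffOn ℝ 2 u (Ioi 0))
  (hode : ∀ x, 0 < x → (1 - u x ^ 2) * deriv (deriv u) x = u x)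
  (hfirst : ∀ x, 0 < x → deriv u x ^ 2 = -log (1 - u x ^ 2))

include hsmooth in
theorem hasDerivAt_of_pos {x : ℝ} (hx : 0 < x) : HasDerivAt u (deriv u x) x :=
  ((hsmooth.differentiableOn (by norm_num)).differentiableAt (Ioi_mem_nhds hx)).hasDerivAt

include hrange in
theorem one_sub_sq_pos {x : ℝ} (hx : 0 < x) : 0 < 1 - u x ^ 2 := by
  obtain ⟨hu0, hu1⟩ := hrange x hx
  nlinarith

include hrange hsmooth hode in
theorem strictMonoOn_deriv : StrictMonoOn (deriv u) (Ioi 0) := by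
  refine strictMonoOn_of_deriv_pos (convex_Ioi 0)
    (hsmooth.continuousOn_deriv_of_isOpen isOpen_Ioi (by norm_num)) fun x hx => ?_
  rw [interior_Ioi] at hx
  exact pos_of_mul_pos_right ((hode x hx).symm ▸ (hrange x hx).1) (one_sub_sq_pos hrange hx).le

include hc hrange hlim hsmooth hode in
theorem deriv_neg {x : ℝ} (hx : 0 < x) : deriv u x < 0 :=
  deriv_neg_of_monotoneOn_deriv hc (hsmooth.differentiableOn (by norm_num))
    (strictMonoOn_deriv hrange hsmooth hode).monotoneOn (fun y hy => (hrange y hy).1) hlim hx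

include hc h0 hrange hsmooth hode in
theorem mul_neg_deriv_le {x : ℝ} (hx : 0 < x) : x * -deriv u x ≤ 1 - u x ^ 2 := by
  have hmvt := sub_le_mul_deriv_of_monotoneOn hx (hc.mono Icc_subset_Ici_self)
    ((hsmooth.differentiableOn (by norm_num)).mono Ioo_subset_Ioi_self)
    ((strictMonoOn_deriv hrange hsmooth hode).monotoneOn.mono Ioc_subset_Ioi_self)
  obtain ⟨hu0, hu1⟩ := hrange x hx
  rw [h0] at hmvt
  nlinarith

include hrange hfirst in
theorem le_abs_deriv {x : ℝ} (hx : 0 < x) : u x ≤ |deriv u x| := by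
  have hlog := log_le_sub_one_of_pos (one_sub_sq_pos hrange hx)
  have hsq : u x ^ 2 ≤ deriv u x ^ 2 := by rw [hfirst x hx]; linarith
  simpa [abs_of_pos (hrange x hx).1] using sq_le_sq.1 hsq

include hc hrange hlim hsmooth hode in
theorem integrableOn_deriv : IntegrableOn (deriv u) (Ioi 0) :=
  integrableOn_Ioi_deriv_of_nonpos (hc.continuousWithinAt self_mem_Ici)
    (fun _ hx => hasDerivAt_of_pos hsmooth hx)
    (fun _ hx => (deriv_neg hc hrange hlim hsmooth hode hx).le) hlim

include hc hrange in
theorem continuousOn_log_one_sub_sq : ContinuousOn (fun x => log (1 - u x ^ 2)) (Ioi 0) :=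
  ((continuousOn_const.sub ((hc.mono Ioi_subset_Ici_self).pow 2))).log
    fun _ hx => (one_sub_sq_pos hrange hx).ne'

include hc h0 hrange hlim hsmooth hode hfirst in
theorem abs_integrand_le {x : ℝ} (hx : 0 < x) :
    |x * u x * deriv u x / (1 - u x ^ 2)| ≤ -deriv u x := by
  have hv := one_sub_sq_pos hrange hx
  have hd := deriv_neg hc hrange hlim hsmooth hode hx
  have hmvt := mul_neg_deriv_le hc h0 hrange hsmooth hode hx
  have hu := le_abs_deriv hrange hfirst hx
  rw [abs_of_neg hd] at hu
  obtain ⟨hu0, -⟩ := hrange x hx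
  rw [abs_div, abs_of_pos hv, div_le_iff₀ hv,
    abs_of_neg (mul_neg_of_pos_of_neg (mul_pos hx hu0) hd)]
  nlinarith

include hc h0 hrange hlim hsmooth hode hfirst in
theorem integrableOn_integrand :
    IntegrableOn (fun x => x * u x * deriv u x / (1 - u x ^ 2)) (Ioi 0) := by
  refine integrableOn_of_continuousOn_of_abs_le measurableSet_Ioi
    (integrableOn_deriv hc hrange hlim hsmooth hode).neg ?_
    fun x hx => abs_integrand_le hc h0 hrange hlim hsmooth hode hfirst hx
  have hu' := hsmooth.continuousOn_deriv_of_isOpen isOpen_Ioi (by norm_num)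
  exact ((continuousOn_id.mul (hc.mono Ioi_subset_Ici_self)).mul hu').div
    (continuousOn_const.sub ((hc.mono Ioi_subset_Ici_self).pow 2))
    fun _ hx => (one_sub_sq_pos hrange hx).ne'

include hrange in
theorem log_one_sub_sq_neg {x : ℝ} (hx : 0 < x) : log (1 - u x ^ 2) < 0 :=
  log_neg (one_sub_sq_pos hrange hx) (by nlinarith [(hrange x hx).1])

include hc h0 hrange hlim hsmooth hode in
theorem neg_log_one_sub_sq_le_of_le_one {x : ℝ} (hx : 0 < x) (hx1 : x ≤ 1) :
    -log (1 - u x ^ 2) ≤ -log x - log (-deriv u 1) := by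
  have hd1 := deriv_neg hc hrange hlim hsmooth hode one_pos
  have hmono := (strictMonoOn_deriv hrange hsmooth hode).monotoneOn hx (mem_Ioi.2 one_pos) hx1
  have hle : x * -deriv u 1 ≤ 1 - u x ^ 2 :=
    (mul_le_mul_of_nonneg_left (neg_le_neg hmono) hx.le).trans
      (mul_neg_deriv_le hc h0 hrange hsmooth hode hx)
  have hlog := log_le_log (mul_pos hx (neg_pos.2 hd1)) hle
  rw [log_mul hx.ne' (neg_pos.2 hd1).ne'] at hlog
  linarith

include hc hrange hlim hsmooth hode hfirst in
theorem neg_log_one_sub_sq_le_of_one_le {x : ℝ} (hx1 : 1 ≤ x) :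
    -log (1 - u x ^ 2) ≤ -deriv u 1 * -deriv u x := by
  have hx : 0 < x := one_pos.trans_le hx1
  have hd := deriv_neg hc hrange hlim hsmooth hode hx
  have hmono := (strictMonoOn_deriv hrange hsmooth hode).monotoneOn (mem_Ioi.2 one_pos) hx hx1
  rw [← hfirst x hx]
  nlinarith

include hc h0 hrange hlim hsmooth hode hfirst in
theorem integrableOn_log_one_sub_sq : IntegrableOn (fun x => log (1 - u x ^ 2)) (Ioi 0) := by
  have hcont := continuousOn_log_one_sub_sq hc hrange
  have hnear : IntegrableOn (fun x => log (1 - u x ^ 2)) (Ioc 0 1) := by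
    refine integrableOn_of_continuousOn_of_abs_le measurableSet_Ioc
      (G := fun x => -log x - log (-deriv u 1)) ?_ (hcont.mono Ioc_subset_Ioi_self)
      fun x hx => ?_
    · exact ((intervalIntegrable_iff_integrableOn_Ioc_of_le zero_le_one).1
        intervalIntegral.intervalIntegrable_log').neg.sub
        (integrableOn_const measure_Ioc_lt_top.ne)
    · rw [abs_of_neg (log_one_sub_sq_neg hrange hx.1)]
      exact neg_log_one_sub_sq_le_of_le_one hc h0 hrange hlim hsmooth hode hx.1 hx.2
  have htail : IntegrableOn (fun x => log (1 - u x ^ 2)) (Ioi 1) := by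
    refine integrableOn_of_continuousOn_of_abs_le measurableSet_Ioi
      (((integrableOn_deriv hc hrange hlim hsmooth hode).mono_set
        (Ioi_subset_Ioi zero_le_one)).neg.const_mul (-deriv u 1))
      (hcont.mono (Ioi_subset_Ioi zero_le_one)) fun x hx => ?_
    rw [abs_of_neg (log_one_sub_sq_neg hrange (one_pos.trans hx))]
    exact neg_log_one_sub_sq_le_of_one_le hc hrange hlim hsmooth hode hfirst (le_of_lt hx)
  simpa [Ioc_union_Ioi_eq_Ioi zero_le_one] using hnear.union htail

include hc h0 hrange hlim hsmooth hode in
theorem tendsto_mul_log_one_sub_sq_nhdsGT_zero :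
    Tendsto (fun x => x * log (1 - u x ^ 2)) (𝓝[>] 0) (𝓝 0) := by
  refine squeeze_zero_norm' (a := fun x => -(x * log x) - log (-deriv u 1) * x) ?_ ?_
  · filter_upwards [Ioc_mem_nhdsGT zero_lt_one] with x ⟨hx, hx1⟩
    rw [norm_mul, Real.norm_eq_abs, Real.norm_eq_abs, abs_of_pos hx,
      abs_of_neg (log_one_sub_sq_neg hrange hx)]
    nlinarith [neg_log_one_sub_sq_le_of_le_one hc h0 hrange hlim hsmooth hode hx hx1]
  · have hb : Continuous fun x => -(x * log x) - log (-deriv u 1) * x :=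
      continuous_mul_log.neg.sub (continuous_const.mul continuous_id)
    simpa using (hb.tendsto 0).mono_left nhdsWithin_le_nhds

include hc h0 hrange hlim hsmooth hode hfirst in
theorem tendsto_mul_log_one_sub_sq_atTop :
    Tendsto (fun x => x * log (1 - u x ^ 2)) atTop (𝓝 0) := by
  refine squeeze_zero_norm' (a := fun x => √(-log (1 - u x ^ 2))) ?_ ?_
  · filter_upwards [eventually_gt_atTop 0] with x hx
    have hd := deriv_neg hc hrange hlim hsmooth hode hx
    have hmvt := mul_neg_deriv_le hc h0 hrange hsmooth hode hx
    rw [← hfirst x hx, sqrt_sq_eq_abs, abs_of_neg hd, norm_mul, Real.norm_eq_abs,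
      Real.norm_eq_abs, abs_of_pos hx, abs_of_neg (log_one_sub_sq_neg hrange hx),
      ← hfirst x hx]
    nlinarith [(hrange x hx).1]
  · have hφ : ContinuousAt (fun t : ℝ => √(-log (1 - t ^ 2))) 0 := by
      fun_prop (disch := norm_num)
    simpa [Function.comp_def] using hφ.tendsto.comp hlim

include hc h0 hrange hlim hsmooth hode hfirst in
theorem setIntegral_integrand_eq :
    ∫ x in Ioi 0, x * u x * deriv u x / (1 - u x ^ 2) =
      1 / 2 * ∫ x in Ioi 0, log (1 - u x ^ 2) := by
  have hibp := integral_Ioi_mul_deriv_eq_deriv_mul (u := fun x => x) (u' := fun _ => 1)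
    (v' := fun x => -2 * u x * deriv u x / (1 - u x ^ 2)) (fun x _ => hasDerivAt_id x)
    (fun x hx => hasDerivAt_log_one_sub_sq (hasDerivAt_of_pos hsmooth hx)
      (one_sub_sq_pos hrange hx).ne')
    (IntegrableOn.congr_fun
      ((integrableOn_integrand hc h0 hrange hlim hsmooth hode hfirst).const_mul (-2))
      (fun x _ => by simp only [Pi.mul_apply]; ring) measurableSet_Ioi)
    (by simpa [Pi.mul_def] using integrableOn_log_one_sub_sq hc h0 hrange hlim hsmooth hode hfirst)
    (tendsto_mul_log_one_sub_sq_nhdsGT_zero hc h0 hrange hlim hsmooth hode)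
    (tendsto_mul_log_one_sub_sq_atTop hc h0 hrange hlim hsmooth hode hfirst)
  calc ∫ x in Ioi 0, x * u x * deriv u x / (1 - u x ^ 2)
      = ∫ x in Ioi 0, -(1 / 2) * (x * (-2 * u x * deriv u x / (1 - u x ^ 2))) := by
        congr 1; ext x; ring
    _ = 1 / 2 * ∫ x in Ioi 0, log (1 - u x ^ 2) := by
        rw [integral_const_mul, hibp]; simp

include hc h0 hrange hlim hsmooth hode hfirst in
theorem setIntegral_log_one_sub_sq_neg : ∫ x in Ioi 0, log (1 - u x ^ 2) < 0 :=
  setIntegral_neg_of_forall_neg measurableSet_Ioi (by simp)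
    (integrableOn_log_one_sub_sq hc h0 hrange hlim hsmooth hode hfirst)
    fun _ hx => log_one_sub_sq_neg hrange hx

end CuspedSoliton

/-- the nondegeneracy (Fredholm obstruction) condition for the
cusped soliton: x·u·u'/(1 − u²) and log(1 − u²) are integrable on ℝ and
∫_ℝ x·u·u'/(1 − u²) dx = (1/2)∫_ℝ log(1 − u²) dx < 0. -/
theorem cusped_fredholm_obstruction
    (u : ℝ → ℝ)
    (hcont : Continuous u)
    (heven : ∀ x : ℝ, u (-x) = u x)
    (h0 : u 0 = 1)
    (hrange : ∀ x : ℝ, x ≠ 0 → 0 < u x ∧ u x < 1)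
    (hdecay : Tendsto u (cocompact ℝ) (nhds 0))
    (hsmooth : ContDiffOn ℝ 2 u {(0 : ℝ)}ᶜ)
    (heq : ∀ x : ℝ, x ≠ 0 → (1 - u x ^ 2) * deriv (deriv u) x = u x)
    (hinv : ∀ x : ℝ, x ≠ 0 → (deriv u x) ^ 2 = -Real.log (1 - u x ^ 2)) :
    Integrable (fun x : ℝ => x * u x * deriv u x / (1 - u x ^ 2)) ∧
    Integrable (fun x : ℝ => Real.log (1 - u x ^ 2)) ∧
    (∫ x : ℝ, x * u x * deriv u x / (1 - u x ^ 2)) =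
      (1 / 2) * ∫ x : ℝ, Real.log (1 - u x ^ 2) ∧
    (∫ x : ℝ, x * u x * deriv u x / (1 - u x ^ 2)) < 0 := by
  have hc := hcont.continuousOn (s := Ici 0)
  have hlim : Tendsto u atTop (𝓝 0) := hdecay.mono_left atTop_le_cocompact
  have hrange' (x : ℝ) (hx : 0 < x) := hrange x hx.ne'
  have hsmooth' : ContDiffOn ℝ 2 u (Ioi 0) := hsmooth.mono fun _ hx => ne_of_gt hx
  have hode (x : ℝ) (hx : 0 < x) := heq x hx.ne'
  have hfirst (x : ℝ) (hx : 0 < x) := hinv x hx.ne'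
  have hf_even : Function.Even fun x => x * u x * deriv u x / (1 - u x ^ 2) := fun x => by
    simp only [heven x, Function.Even.deriv_neg heven x]
    ring
  have hL_even : Function.Even fun x => log (1 - u x ^ 2) := fun x => by simp only [heven x]
  have hfi := CuspedSoliton.integrableOn_integrand hc h0 hrange' hlim hsmooth' hode hfirst
  have hLi := CuspedSoliton.integrableOn_log_one_sub_sq hc h0 hrange' hlim hsmooth' hode hfirst
  have hI := CuspedSoliton.setIntegral_integrand_eq hc h0 hrange' hlim hsmooth' hode hfirst
  have hneg := CuspedSoliton.setIntegral_log_one_sub_sq_neg hc h0 hrange' hlim hsmooth' hode hfirst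
  refine ⟨hf_even.integrable hfi, hL_even.integrable hLi, ?_, ?_⟩
  · rw [hf_even.integral_eq_two_mul_integral_Ioi, hL_even.integral_eq_two_mul_integral_Ioi, hI]
    ring
  · rw [hf_even.integral_eq_two_mul_integral_Ioi, hI]
    linarith
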